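/- arXiv:2311.18766 — 3 statements merged into one kernel-verified Lean document; each statement's English description precedes it below -/
import Mathlib

section
/- Let F be a finite field of characteristic p and let P ∈ F[[X]] be a formal power series. If the p-kernel of the coefficient sequence of P, namely the set of functions { n ↦ coeff (p^k · n + r) P : k ∈ ℕ, 0 ≤ r < p^k } ⊆ (ℕ → F), is finite, then P is algebraic over F[X]. -/
/-!
Let `q = |F|`, a power of `p`. The finite `p`-kernel `S` of the coefficients of `P` is closed under
the decimations `b ↦ (n ↦ b (q n + r))`, `r < q`, and `mk b = ∑_{r<q} X^r · expand_q (mk b_r)`.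
Hence the `F[X]`-spans `V_k` of `{expand_{q^k} (mk b) : b ∈ S}` increase with `k`, so
`P, expand_q P, …, expand_{q^d} P` (`d = |S|`) all lie in `V_d`, which has at most `d` generators;
they are therefore `F[X]`-linearly dependent. Over a finite field `expand_{q^k} P = P^{q^k}`, and a
nontrivial relation `∑ g_k P^{q^k} = 0` shows that `P` is algebraic.
-/

open PowerSeries

section Kernel

variable {α : Type*}

def pKernel (p : ℕ) (a : ℕ → α) : Set (ℕ → α) :=
  {b | ∃ k r : ℕ, r < p ^ k ∧ b = fun n => a (p ^ k * n + r)}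

def DecimationClosed (q : ℕ) (S : Set (ℕ → α)) : Prop :=
  ∀ b ∈ S, ∀ r < q, (fun n => b (q * n + r)) ∈ S

theorem self_mem_pKernel (p : ℕ) (a : ℕ → α) : a ∈ pKernel p a :=
  ⟨0, 0, by simp, by simp⟩

theorem decimationClosed_pKernel_pow (p s : ℕ) (a : ℕ → α) :
    DecimationClosed (p ^ s) (pKernel p a) := by
  rintro _ ⟨k, r₀, hr₀, rfl⟩ r hr
  refine ⟨k + s, p ^ k * r + r₀, ?_, funext fun n => by ring_nf⟩
  calc p ^ k * r + r₀ < p ^ k * (r + 1) := by rw [mul_add_one]; omega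
    _ ≤ p ^ k * p ^ s := Nat.mul_le_mul_left _ hr
    _ = p ^ (k + s) := (pow_add p k s).symm

end Kernel

theorem Transcendental.linearIndependent_pow {R A : Type*} [CommRing R] [Ring A] [Algebra R A]
    {x : A} (hx : Transcendental R x) {ι : Type*} {n : ι → ℕ} (hn : Function.Injective n) :
    LinearIndependent R fun i => x ^ n i := by
  have := ((Polynomial.basisMonomials R).linearIndependent.comp n hn).map'
    (Polynomial.aeval x).toLinearMap (LinearMap.ker_eq_bot.mpr (transcendental_iff_injective.mp hx))
  simpa [Function.comp_def] using this

namespace PowerSeries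

section CommRing

variable {R : Type*} [CommRing R]

theorem mk_eq_sum_X_pow_mul_expand {q : ℕ} (hq : q ≠ 0) (b : ℕ → R) :
    mk b = ∑ r ∈ Finset.range q, X ^ r * expand q hq (mk fun n => b (q * n + r)) := by
  ext m
  rw [coeff_mk, map_sum, Finset.sum_eq_single (m % q)]
  · rw [coeff_X_pow_mul', if_pos (Nat.mod_le m q), coeff_expand, if_pos (Nat.dvd_sub_mod m),
      coeff_mk, Nat.mul_div_cancel' (Nat.dvd_sub_mod m), Nat.sub_add_cancel (Nat.mod_le m q)]
  · intro r hr hne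
    rw [coeff_X_pow_mul', coeff_expand]
    split_ifs with hrm hdvd
    · obtain ⟨c, hc⟩ := hdvd
      exact absurd (by rw [show m = q * c + r by omega, Nat.mul_add_mod,
        Nat.mod_eq_of_lt (Finset.mem_range.mp hr)]) hne
    all_goals rfl
  · exact fun h => absurd (Finset.mem_range.mpr (Nat.mod_lt m (Nat.pos_of_ne_zero hq))) h

theorem expand_pow_mk_mem_span {q : ℕ} (hq : q ≠ 0) {S : Set (ℕ → R)} (hS : DecimationClosed q S)
    {b : ℕ → R} (hb : b ∈ S) (k : ℕ) :
    expand (q ^ k) (pow_ne_zero k hq) (mk b) ∈ Submodule.span (Polynomial R)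
      ((fun c => expand (q ^ (k + 1)) (pow_ne_zero (k + 1) hq) (mk c)) '' S) := by
  rw [mk_eq_sum_X_pow_mul_expand hq b, map_sum]
  refine Submodule.sum_mem _ fun r hr => ?_
  have hterm : expand (q ^ k) (pow_ne_zero k hq) (X ^ r * expand q hq (mk fun n => b (q * n + r)))
      = algebraMap (Polynomial R) R⟦X⟧ (Polynomial.X ^ (q ^ k * r)) *
        expand (q ^ (k + 1)) (pow_ne_zero (k + 1) hq) (mk fun n => b (q * n + r)) := by
    simp [algebraMap_apply', pow_mul, ← expand_mul, pow_succ]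
  rw [hterm, ← Algebra.smul_def]
  exact Submodule.smul_mem _ _
    (Submodule.subset_span ⟨_, hS b hb r (Finset.mem_range.mp hr), rfl⟩)

theorem not_linearIndependent_expand_pow_mk [Nontrivial R] {q : ℕ} (hq : q ≠ 0)
    {S : Finset (ℕ → R)} (hS : DecimationClosed q (S : Set (ℕ → R))) {a : ℕ → R} (ha : a ∈ S) :
    ¬ LinearIndependent (Polynomial R) fun k => expand (q ^ k) (pow_ne_zero k hq) (mk a) := by
  classical
  intro hli
  set V : ℕ → Submodule (Polynomial R) R⟦X⟧ := fun k => Submodule.span (Polynomial R)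
    ((fun c => expand (q ^ k) (pow_ne_zero k hq) (mk c)) '' S)
  have hV : Monotone V := monotone_nat_of_le_succ fun k => Submodule.span_le.mpr <| by
    rintro _ ⟨b, hb, rfl⟩
    exact expand_pow_mk_mem_span hq hS hb k
  have hcard := linearIndependent_le_span_aux' _ (hli.comp _ (Fin.val_injective (n := S.card + 1)))
    (S.image fun c => expand (q ^ S.card) (pow_ne_zero _ hq) (mk c) : Set R⟦X⟧) <| by
      rintro _ ⟨k, rfl⟩
      rw [Finset.coe_image]
      exact hV (Nat.le_of_lt_succ k.isLt) (Submodule.subset_span ⟨a, ha, rfl⟩)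
  simp only [Fintype.card_fin, Finset.coe_image, Fintype.card_ofFinset, Finset.toFinset_coe]
    at hcard
  have := hcard.trans Finset.card_image_le
  omega

end CommRing

theorem map_iterateFrobenius_expand {R : Type*} [CommRing R] (p : ℕ) (hp : p ≠ 0) [ExpChar R p]
    (f : R⟦X⟧) (n : ℕ) :
    map (iterateFrobenius R p n) (expand (p ^ n) (pow_ne_zero n hp) f) = f ^ p ^ n :=
  MvPowerSeries.map_iterateFrobenius_expand p hp f n

theorem pow_card_pow_eq_expand {F : Type*} [Field F] [Fintype F] (f : F⟦X⟧) (k : ℕ) :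
    f ^ Fintype.card F ^ k = expand (Fintype.card F ^ k) (pow_ne_zero k Fintype.card_ne_zero) f := by
  obtain ⟨n, hp, hcard⟩ := FiniteField.card F (ringChar F)
  have : ExpChar F (ringChar F) := ExpChar.prime hp
  have hfrob : iterateFrobenius F (ringChar F) (n * k) = RingHom.id F := RingHom.ext fun c => by
    rw [iterateFrobenius_def, pow_mul, ← hcard, FiniteField.pow_card_pow, RingHom.id_apply]
  have hqk : Fintype.card F ^ k = ringChar F ^ (n * k) := by rw [hcard, pow_mul]
  have key := map_iterateFrobenius_expand _ hp.ne_zero f (n * k)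
  rw [hfrob, map_id, id_eq] at key
  simp only [hqk]
  exact key.symm

end PowerSeries

theorem isAlgebraic_of_pKernel_finite_general (p : ℕ) (F : Type*) [Field F] [Fintype F]
    [CharP F p] (P : PowerSeries F)
    (hfin : Set.Finite {a : ℕ → F | ∃ k r : ℕ, r < p ^ k ∧
      a = fun n => PowerSeries.coeff (p ^ k * n + r) P}) :
    IsAlgebraic (Polynomial F) P := by
  obtain ⟨s, -, hcard⟩ := FiniteField.card F p
  have hclosed : DecimationClosed (Fintype.card F) (pKernel p fun n => coeff n P) := by
    rw [hcard]
    exact decimationClosed_pKernel_pow p s _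
  have hdep := not_linearIndependent_expand_pow_mk Fintype.card_ne_zero
    (S := hfin.toFinset) (by rw [hfin.coe_toFinset]; exact hclosed)
    (hfin.mem_toFinset.mpr (self_mem_pKernel p fun n => coeff n P))
  have hP : mk (fun n => coeff n P) = P := by ext; rw [coeff_mk]
  by_contra htr
  apply hdep
  simpa only [hP, ← pow_card_pow_eq_expand] using
    Transcendental.linearIndependent_pow htr (Nat.pow_right_injective Fintype.one_lt_card)

/-- If the `p`-kernel of the coefficient sequence of `P ∈ F⟦X⟧` is finite
(`F` a finite field of characteristic `p`), then `P` is algebraic over `F[X]`. -/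
theorem isAlgebraic_of_pKernel_finite (p : ℕ) [Fact p.Prime] (F : Type*) [Field F] [Fintype F]
    [CharP F p] (P : PowerSeries F)
    (hfin : Set.Finite {a : ℕ → F | ∃ k r : ℕ, r < p ^ k ∧
      a = fun n => PowerSeries.coeff (p ^ k * n + r) P}) :
    IsAlgebraic (Polynomial F) P :=
  isAlgebraic_of_pKernel_finite_general p F P hfin
end

section
/- Let F be a field of characteristic p with p prime, and let P ∈ F[[X]]. For every natural number m, the m-th coefficient of the (p−1)-fold iterated formal derivative of P equals −coeff (m + p − 1) P if p divides m, and equals 0 otherwise. That is, coeff m (derivative^[p−1] P) = if p ∣ m then −(coeff (m + p − 1) P) else 0. -/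
open PowerSeries hiding coeff_iterate_derivative

theorem Nat.dvd_ascFactorial_of_dvd_add {d n k i : ℕ} (hi : i < k) (h : d ∣ n + i) :
    d ∣ n.ascFactorial k := by
  rw [Nat.ascFactorial_eq_prod_range]
  exact h.trans (Finset.dvd_prod_of_mem _ (Finset.mem_range.2 hi))

section CharP

variable (R : Type*) [Ring R] (p : ℕ) [Fact p.Prime] [CharP R p]

theorem cast_factorial_pred_eq_neg_one : ((p - 1).factorial : R) = -1 := by
  have h := congrArg (ZMod.castHom (dvd_refl p) R) (ZMod.wilsons_lemma (p := p))
  rwa [map_natCast, map_neg, map_one] at h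

/-- The `p - 1` consecutive integers `m + 1, …, m + p - 1` run over the nonzero residues mod `p`
when `p ∣ m`, and otherwise contain a multiple of `p`. -/
theorem cast_ascFactorial_succ_pred (m : ℕ) :
    ((m + 1).ascFactorial (p - 1) : R) = if p ∣ m then -1 else 0 := by
  have hp : p.Prime := Fact.out
  split_ifs with hm
  · rw [Nat.cast_ascFactorial, Nat.cast_succ, (CharP.cast_eq_zero_iff R p m).2 hm, zero_add,
      ← Nat.cast_factorial, cast_factorial_pred_eq_neg_one]
  · have hr : m % p ≠ 0 := fun h => hm (Nat.dvd_of_mod_eq_zero h)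
    have hrp : m % p < p := Nat.mod_lt _ hp.pos
    refine (CharP.cast_eq_zero_iff R p _).2 (Nat.dvd_ascFactorial_of_dvd_add
      (i := p - 1 - m % p) (by omega) ⟨m / p + 1, ?_⟩)
    have := Nat.div_add_mod m p
    rw [mul_add, mul_one]
    omega

end CharP

/-- Over a field of characteristic `p`, the `m`-th coefficient of the `(p-1)`-fold
iterated formal derivative of `P` is `-coeff (m + p - 1) P` if `p ∣ m`, and `0`
otherwise (using Wilson's congruence `(p-1)! ≡ -1 (mod p)`). -/
theorem coeff_iterate_derivative (p : ℕ) [Fact p.Prime] (F : Type*) [Field F] [CharP F p]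
    (P : PowerSeries F) (m : ℕ) :
    PowerSeries.coeff m ((⇑(PowerSeries.derivative F))^[p - 1] P) =
      if p ∣ m then -(PowerSeries.coeff (m + p - 1) P) else 0 := by
  have hp : p.Prime := Fact.out
  rw [PowerSeries.coeff_iterate_derivative, cast_ascFactorial_succ_pred F p,
    show m + (p - 1) = m + p - 1 by have := hp.one_le; omega]
  split_ifs <;> simp
end

section
/- Let F be a finite field of characteristic p and let P ∈ F[[X]] be algebraic over F[X] (via the natural algebra map F[X] → F[[X]]). Then the formal derivative of P is also algebraic over F[X]. -/
/-!
Ore's argument. Up to a nonzero factor `P` is integral, so the powers `P ^ p ^ i` are linearly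
dependent over `F[X]`. Starting from its lowest nonzero coefficient, such a dependence is a
relation `∑ cᵢ • Q ^ p ^ i = 0` with `c₀ ≠ 0` for `Q = P ^ p ^ k`, and these relations descend
from `y ^ p` to `y`: as `F` is perfect, each `cᵢ` is `∑_{s < p} X ^ s * bᵢₛ ^ p`, and since
`1, X, …, X ^ (p - 1)` are linearly independent over the `p`-th powers in `F⟦X⟧`, every
`∑ᵢ bᵢₛ • y ^ p ^ i` vanishes. Once `c₀ ≠ 0`, differentiating the relation kills every
`P ^ p ^ i` with `i ≥ 1`, leaving `c₀ • P' = -∑ cᵢ' • P ^ p ^ i`, an element of `F[X][P]`.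
-/

open PowerSeries

variable {p : ℕ}

theorem IsAlgebraic.exists_sum_range_smul_pow_eq_zero {R A : Type*} [CommRing R] [IsDomain R]
    [CommRing A] [Algebra R A] {x : A} (hx : IsAlgebraic R x) (e : ℕ → ℕ) :
    ∃ (N : ℕ) (c : ℕ → R), (∃ i < N, c i ≠ 0) ∧ ∑ i ∈ Finset.range N, c i • x ^ e i = 0 := by
  classical
  obtain ⟨r, hr, hint⟩ := hx.exists_integral_multiple
  have := Algebra.finite_adjoin_simple_of_isIntegral hint
  have hdep := Module.Finite.not_linearIndependent_of_infinite (R := R)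
    fun i : ℕ ↦ (⟨(r • x) ^ e i, pow_mem (Algebra.self_mem_adjoin_singleton R _) _⟩ :
      Algebra.adjoin R {r • x})
  obtain ⟨s, g, hg, i, his, hgi⟩ := not_linearIndependent_iff.mp hdep
  have hs := s.subset_range_sup_succ
  refine ⟨_, fun i ↦ if i ∈ s then g i * r ^ e i else 0,
    ⟨i, Finset.mem_range.mp (hs his), by simp [his, hgi, hr]⟩, ?_⟩
  simp only [ite_smul, zero_smul, Finset.sum_ite_mem, Finset.inter_eq_right.mpr hs, mul_smul,
    ← smul_pow]
  simpa using congrArg Subtype.val hg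

variable (p) in
/-- The additive polynomial `∑ cᵢ T ^ p ^ i` is separable exactly when `c₀ ≠ 0`. -/
def HasSeparableAdditiveRelation (R : Type*) {A : Type*} [CommSemiring R] [Semiring A]
    [Algebra R A] (y : A) : Prop :=
  ∃ (N : ℕ) (c : ℕ → R), c 0 ≠ 0 ∧ ∑ i ∈ Finset.range (N + 1), c i • y ^ p ^ i = 0

theorem exists_hasSeparableAdditiveRelation_pow {R A : Type*} [CommSemiring R] [Semiring A]
    [Algebra R A] {x : A} {N : ℕ} {c : ℕ → R} (hc : ∃ i < N, c i ≠ 0)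
    (h : ∑ i ∈ Finset.range N, c i • x ^ p ^ i = 0) :
    ∃ k, HasSeparableAdditiveRelation p R (x ^ p ^ k) := by
  classical
  set k := Nat.find hc
  obtain ⟨hkN, hck⟩ : k < N ∧ c k ≠ 0 := Nat.find_spec hc
  have hlow : ∀ i ∈ Finset.range k, c i • x ^ p ^ i = 0 := fun i hi ↦ by
    have hik := Finset.mem_range.mp hi
    rw [not_not.mp fun hne ↦ Nat.find_min hc hik ⟨hik.trans hkN, hne⟩, zero_smul]
  refine ⟨k, N - k - 1, fun i ↦ c (k + i), hck, ?_⟩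
  rw [← Finset.sum_range_add_sum_Ico _ hkN.le, Finset.sum_eq_zero hlow, zero_add,
    Finset.sum_Ico_eq_sum_range] at h
  rw [show N - k - 1 + 1 = N - k by omega]
  simpa only [← pow_mul, ← pow_add] using h

theorem Derivation.map_pow_char {R A : Type*} [CommSemiring R] [CommRing A] [Algebra R A]
    [CharP A p] (D : Derivation R A A) (a : A) : D (a ^ p) = 0 := by
  rw [D.leibniz_pow, nsmul_eq_mul, CharP.cast_eq_zero, zero_mul]

section PowerSeries

variable {R : Type*} [CommRing R]

theorem PowerSeries.polynomial_smul_eq_coe_mul (q : Polynomial R) (f : R⟦X⟧) :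
    q • f = (q : R⟦X⟧) * f :=
  rfl

theorem PowerSeries.derivative_polynomial_smul (q : Polynomial R) (f : R⟦X⟧) :
    d⁄dX R (q • f) = Polynomial.derivative q • f + q • d⁄dX R f := by
  rw [polynomial_smul_eq_coe_mul, Derivation.leibniz, derivative_coe, smul_eq_mul, smul_eq_mul,
    add_comm, mul_comm]
  rfl

theorem HasSeparableAdditiveRelation.isAlgebraic_derivative [IsDomain R] [CharP R p]
    {P : R⟦X⟧} (hP : IsAlgebraic (Polynomial R) P)
    (h : HasSeparableAdditiveRelation p (Polynomial R) P) :
    IsAlgebraic (Polynomial R) (d⁄dX R P) := by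
  have : CharP R⟦X⟧ p := charP_of_injective_ringHom C_injective p
  obtain ⟨N, c, hc0, hsum⟩ := h
  have hlinear : c 0 • d⁄dX R P
      = -∑ i ∈ Finset.range (N + 1), Polynomial.derivative (c i) • P ^ p ^ i := by
    have hD := congrArg (d⁄dX R) hsum
    rw [map_sum, map_zero] at hD
    have hpow : ∑ i ∈ Finset.range (N + 1), c i • d⁄dX R (P ^ p ^ i) = c 0 • d⁄dX R P := by
      rw [Finset.sum_range_succ', Finset.sum_eq_zero fun i _ ↦ by
        rw [pow_succ, pow_mul, Derivation.map_pow_char, smul_zero], zero_add, pow_zero, pow_one]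
    simp only [derivative_polynomial_smul, Finset.sum_add_distrib, hpow] at hD
    exact eq_neg_of_add_eq_zero_right hD
  have hPmem : P ∈ Subalgebra.algebraicClosure (Polynomial R) R⟦X⟧ := hP
  refine IsAlgebraic.of_smul (mem_nonZeroDivisors_of_ne_zero hc0) ?_
  rw [hlinear]
  exact neg_mem (Subalgebra.sum_mem _ fun i _ ↦ Subalgebra.smul_mem _ (pow_mem hPmem _) _)

variable [Fact p.Prime] [CharP R p]

theorem Polynomial.exists_eq_sum_X_pow_mul_pow_char [PerfectRing R p] (a : Polynomial R) :
    ∃ b : ℕ → Polynomial R, a = ∑ s ∈ Finset.range p, Polynomial.X ^ s * b s ^ p := by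
  induction a using Polynomial.induction_on' with
  | add f g hf hg =>
    obtain ⟨b₁, rfl⟩ := hf
    obtain ⟨b₂, rfl⟩ := hg
    refine ⟨b₁ + b₂, ?_⟩
    simp only [Pi.add_apply, add_pow_char, mul_add, Finset.sum_add_distrib]
  | monomial n c =>
    have hp := (Fact.out : p.Prime)
    refine ⟨fun s ↦ if s = n % p then
        Polynomial.C ((frobeniusEquiv R p).symm c) * Polynomial.X ^ (n / p) else 0, ?_⟩
    rw [Finset.sum_eq_single_of_mem _ (Finset.mem_range.mpr (Nat.mod_lt n hp.pos))]
    all_goals beta_reduce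
    · rw [if_pos rfl, mul_pow, ← map_pow, frobeniusEquiv_symm_pow_p, ← pow_mul, mul_left_comm,
        ← pow_add, Nat.mod_add_div' n p, Polynomial.C_mul_X_pow_eq_monomial]
    · intro t _ htn
      rw [if_neg htn, zero_pow hp.ne_zero, mul_zero]

theorem PowerSeries.coeff_pow_char (f : R⟦X⟧) (n : ℕ) :
    coeff n (f ^ p) = if p ∣ n then coeff (n / p) f ^ p else 0 := by
  have hp := (Fact.out : p.Prime)
  have htrunc : coeff n (f ^ p) = (trunc (n + 1) f ^ p).coeff n := by
    have h := congrArg (Polynomial.coeff · n) (trunc_trunc_pow f (n + 1) p)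
    simp only [coeff_trunc, if_pos n.lt_succ_self] at h
    rw [← h, ← Polynomial.coe_pow, Polynomial.coeff_coe]
  rw [htrunc, ← Polynomial.map_frobenius_expand, Polynomial.coeff_map,
    Polynomial.coeff_expand hp.pos]
  split_ifs
  · rw [coeff_trunc, if_pos (Nat.lt_succ_of_le (Nat.div_le_self n p))]
    rfl
  · exact map_zero _

theorem PowerSeries.eq_zero_of_sum_X_pow_mul_pow_char_eq_zero [IsReduced R] {g : ℕ → R⟦X⟧}
    (h : ∑ t ∈ Finset.range p, X ^ t * g t ^ p = 0) {s : ℕ} (hs : s < p) : g s = 0 := by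
  have hp := (Fact.out : p.Prime)
  ext n
  have hother : ∀ t ∈ Finset.range p, t ≠ s → coeff (p * n + s) (X ^ t * g t ^ p) = 0 := by
    intro t ht hts
    rw [coeff_X_pow_mul', coeff_pow_char]
    split_ifs with hle hdvd
    · obtain ⟨u, hu⟩ := hdvd
      have hmod := congrArg (· % p) (show p * u + t = p * n + s by omega)
      simp only [Nat.mul_add_mod, Nat.mod_eq_of_lt hs,
        Nat.mod_eq_of_lt (Finset.mem_range.mp ht)] at hmod
      exact absurd hmod hts
    all_goals rfl
  have hcoeff := congrArg (coeff (p * n + s)) h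
  rw [map_sum, Finset.sum_eq_single_of_mem s (Finset.mem_range.mpr hs) hother,
    coeff_X_pow_mul', if_pos le_add_self, Nat.add_sub_cancel, coeff_pow_char,
    if_pos (dvd_mul_right p n), Nat.mul_div_cancel_left n hp.pos, map_zero] at hcoeff
  rw [map_zero]
  exact IsNilpotent.eq_zero ⟨p, hcoeff⟩

variable [PerfectRing R p]

theorem PowerSeries.exists_sum_smul_eq_zero_of_sum_smul_pow_char_eq_zero [IsReduced R]
    {ι : Type*} {s : Finset ι} {a : ι → Polynomial R} {y : ι → R⟦X⟧}
    (h : ∑ i ∈ s, a i • y i ^ p = 0) {j : ι} (hj : a j ≠ 0) :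
    ∃ b : ι → Polynomial R, b j ≠ 0 ∧ ∑ i ∈ s, b i • y i = 0 := by
  have hp := (Fact.out : p.Prime)
  have : CharP R⟦X⟧ p := charP_of_injective_ringHom C_injective p
  choose b hb using fun i ↦ Polynomial.exists_eq_sum_X_pow_mul_pow_char (p := p) (a i)
  obtain ⟨t, ht, hbt⟩ : ∃ t < p, b j t ≠ 0 := by
    by_contra! hzero
    refine hj ((hb j).trans (Finset.sum_eq_zero fun t ht ↦ ?_))
    rw [hzero t (Finset.mem_range.mp ht), zero_pow hp.ne_zero, mul_zero]
  refine ⟨fun i ↦ b i t, hbt, eq_zero_of_sum_X_pow_mul_pow_char_eq_zero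
    (g := fun t ↦ ∑ i ∈ s, b i t • y i) ?_ ht⟩
  calc ∑ t ∈ Finset.range p, X ^ t * (∑ i ∈ s, b i t • y i) ^ p
      = ∑ i ∈ s, (∑ t ∈ Finset.range p, Polynomial.X ^ t * b i t ^ p) • y i ^ p := by
        simp only [sum_pow_char, smul_pow, Finset.mul_sum, Finset.sum_smul]
        rw [Finset.sum_comm]
        refine Finset.sum_congr rfl fun i _ ↦ Finset.sum_congr rfl fun t _ ↦ ?_
        simp only [polynomial_smul_eq_coe_mul, Polynomial.coe_mul, Polynomial.coe_pow,
          Polynomial.coe_X, mul_assoc]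
    _ = 0 := by simpa only [← hb] using h

theorem HasSeparableAdditiveRelation.of_pow_char [IsReduced R] {y : R⟦X⟧}
    (h : HasSeparableAdditiveRelation p (Polynomial R) (y ^ p)) :
    HasSeparableAdditiveRelation p (Polynomial R) y := by
  obtain ⟨N, c, hc, hsum⟩ := h
  simp only [pow_right_comm y p] at hsum
  obtain ⟨b, hb, hsum'⟩ := PowerSeries.exists_sum_smul_eq_zero_of_sum_smul_pow_char_eq_zero
    (y := fun i ↦ y ^ p ^ i) hsum hc
  exact ⟨N, b, hb, hsum'⟩

theorem HasSeparableAdditiveRelation.of_pow_char_pow [IsReduced R] {y : R⟦X⟧} :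
    ∀ {k : ℕ}, HasSeparableAdditiveRelation p (Polynomial R) (y ^ p ^ k) →
      HasSeparableAdditiveRelation p (Polynomial R) y
  | 0, h => by simpa using h
  | k + 1, h => of_pow_char_pow (of_pow_char (by rwa [← pow_mul, ← pow_succ]))

theorem PowerSeries.hasSeparableAdditiveRelation_of_isAlgebraic [IsDomain R] {P : R⟦X⟧}
    (hP : IsAlgebraic (Polynomial R) P) : HasSeparableAdditiveRelation p (Polynomial R) P := by
  obtain ⟨N, c, hc, h⟩ := hP.exists_sum_range_smul_pow_eq_zero (p ^ ·)
  obtain ⟨k, hk⟩ := exists_hasSeparableAdditiveRelation_pow hc h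
  exact hk.of_pow_char_pow

end PowerSeries

/-- Over a finite field of characteristic `p`, the formal derivative of a power series
algebraic over `F[X]` is again algebraic over `F[X]`. -/
theorem isAlgebraic_derivative (p : ℕ) [Fact p.Prime] (F : Type*) [Field F] [Fintype F]
    [CharP F p] (P : PowerSeries F) (hP : IsAlgebraic (Polynomial F) P) :
    IsAlgebraic (Polynomial F) (PowerSeries.derivative F P) :=
  (hasSeparableAdditiveRelation_of_isAlgebraic (p := p) hP).isAlgebraic_derivative hP
end
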